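/- arXiv:2006.11461 — 4 statements merged into one kernel-verified Lean document; each statement's English description precedes it below -/
import Mathlib

section
/- Assume the bandwidth sequence satisfies h_n → 0 as n → ∞. If x₁ ≠ x₂ are two distinct points of ℝ^d at which the common density f is continuous, then n·h_n^d · Cov[f_n(x₁), f_n(x₂)] → 0 as n → ∞, where Cov[X, Y] = E[XY] − E[X]E[Y] denotes the covariance of the real random variables f_n(x₁) and f_n(x₂). -/
/-!
For i.i.d. samples the covariance of the two kernel sums is `n` times the covariance for a single
sample, so with `K_h(u) = K(u / h)` and `X` distributed like the samples,
`n h^d Cov[f_n(x₁), f_n(x₂)] = h^(-d) (E[K_h(x₁ - X) K_h(x₂ - X)] - E[K_h(x₁ - X)] E[K_h(x₂ - X)])`.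
A density bounded by `C` gives `E[K_h(x - X)] ≤ C h^d ∫ K`, so the product of the means is
`O(h^(2d))`. For the mixed moment, at every `y` one of `‖x₁ - y‖`, `‖x₂ - y‖` is at least
`‖x₁ - x₂‖ / 2`; once `K ≤ ε` outside the ball of radius `‖x₁ - x₂‖ / (2h)` this gives
`K_h(x₁ - y) K_h(x₂ - y) ≤ ε (K_h(x₁ - y) + K_h(x₂ - y))`, hence the mixed moment is `o(h^d)`.
-/

open MeasureTheory ProbabilityTheory Filter Real Topology Module

theorem integral_le_toReal_mul_integral_of_le_smul {α : Type*} [MeasurableSpace α]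
    {μ ν : Measure α} {c : ENNReal} (hc : c ≠ ⊤) (hνμ : ν ≤ c • μ) {g : α → ℝ} (hg : 0 ≤ g)
    (hgi : Integrable g μ) : ∫ a, g a ∂ν ≤ c.toReal * ∫ a, g a ∂μ := by
  calc ∫ a, g a ∂ν ≤ ∫ a, g a ∂(c • μ) :=
        integral_mono_measure hνμ (ae_of_all _ hg) (hgi.smul_measure hc)
    _ = c.toReal * ∫ a, g a ∂μ := by rw [integral_smul_measure, smul_eq_mul]

theorem mul_le_mul_add_of_tail_le {E : Type*} [SeminormedAddCommGroup E] {K : E → ℝ}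
    (hK0 : 0 ≤ K) {r ε : ℝ} (htail : ∀ u, r ≤ ‖u‖ → K u ≤ ε) {a b : E}
    (hab : 2 * r ≤ ‖a - b‖) : K a * K b ≤ ε * (K a + K b) := by
  by_cases ha : r ≤ ‖a‖
  · have hε : 0 ≤ ε := (hK0 a).trans (htail a ha)
    nlinarith [mul_le_mul_of_nonneg_right (htail a ha) (hK0 b), mul_nonneg hε (hK0 a)]
  · have hb : r ≤ ‖b‖ := by linarith [norm_sub_le a b]
    have hε : 0 ≤ ε := (hK0 b).trans (htail b hb)
    nlinarith [mul_le_mul_of_nonneg_left (htail b hb) (hK0 a), mul_nonneg hε (hK0 b)]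

theorem memLp_comp_inv_smul_sub {E : Type*} [NormedAddCommGroup E] [NormedSpace ℝ E]
    [MeasurableSpace E] [BorelSpace E] {ν : Measure E} [IsFiniteMeasure ν] {K : E → ℝ}
    (hK_meas : Measurable K) {B : ℝ} (hKB : ∀ u, ‖K u‖ ≤ B) (t : ℝ) (x : E) {p : ENNReal} :
    MemLp (fun y => K (t⁻¹ • (x - y))) p ν :=
  MemLp.of_bound (hK_meas.comp (by fun_prop)).aestronglyMeasurable B (ae_of_all _ fun _ => hKB _)

section KernelSmoothing

variable {E : Type*} [NormedAddCommGroup E] [NormedSpace ℝ E] [FiniteDimensional ℝ E]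
  [MeasurableSpace E] [BorelSpace E] {μ : Measure E} [μ.IsAddHaarMeasure]

theorem MeasureTheory.Integrable.comp_inv_smul_sub {K : E → ℝ} (hK : Integrable K μ) {t : ℝ}
    (ht : t ≠ 0) (x : E) : Integrable (fun y => K (t⁻¹ • (x - y))) μ :=
  (hK.comp_smul (inv_ne_zero ht)).comp_sub_left x

theorem integral_comp_inv_smul_sub (K : E → ℝ) {t : ℝ} (ht : 0 ≤ t) (x : E) :
    ∫ y, K (t⁻¹ • (x - y)) ∂μ = t ^ finrank ℝ E * ∫ u, K u ∂μ := by
  rw [integral_sub_left_eq_self (fun u => K (t⁻¹ • u)) μ x,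
    Measure.integral_comp_inv_smul_of_nonneg μ K ht, smul_eq_mul]

variable {ν : Measure E} {c : ENNReal} {K : E → ℝ}

theorem integral_kernel_le (hc : c ≠ ⊤) (hνμ : ν ≤ c • μ) (hK0 : 0 ≤ K)
    (hK : Integrable K μ) {t : ℝ} (ht : 0 < t) (x : E) :
    ∫ y, K (t⁻¹ • (x - y)) ∂ν ≤ c.toReal * (∫ u, K u ∂μ) * t ^ finrank ℝ E := by
  calc ∫ y, K (t⁻¹ • (x - y)) ∂ν ≤ c.toReal * ∫ y, K (t⁻¹ • (x - y)) ∂μ :=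
        integral_le_toReal_mul_integral_of_le_smul hc hνμ (fun y => hK0 (t⁻¹ • (x - y)))
          (hK.comp_inv_smul_sub ht.ne' x)
    _ = c.toReal * (∫ u, K u ∂μ) * t ^ finrank ℝ E := by
        rw [integral_comp_inv_smul_sub K ht.le x]; ring

theorem integral_kernel_mul_kernel_le_of_tail_le (hc : c ≠ ⊤) (hνμ : ν ≤ c • μ) (hK0 : 0 ≤ K)
    (hK : Integrable K μ) {r ε : ℝ} (htail : ∀ u, r ≤ ‖u‖ → K u ≤ ε) {x₁ x₂ : E} {t : ℝ}
    (ht : 0 < t) (hfar : 2 * r ≤ t⁻¹ * ‖x₁ - x₂‖) :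
    ∫ y, K (t⁻¹ • (x₁ - y)) * K (t⁻¹ • (x₂ - y)) ∂ν
      ≤ ε * (2 * (c.toReal * (∫ u, K u ∂μ) * t ^ finrank ℝ E)) := by
  have hdist : ∀ y, ‖t⁻¹ • (x₁ - y) - t⁻¹ • (x₂ - y)‖ = t⁻¹ * ‖x₁ - x₂‖ := fun y => by
    rw [← smul_sub, sub_sub_sub_cancel_right, norm_smul, norm_inv, Real.norm_of_nonneg ht.le]
  have hε : 0 ≤ ε := (hK0 _).trans <| htail (t⁻¹ • (x₁ - x₂)) <| by
    rw [norm_smul, norm_inv, Real.norm_of_nonneg ht.le]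
    linarith [mul_nonneg (inv_nonneg.2 ht.le) (norm_nonneg (x₁ - x₂))]
  have hint : ∀ x, Integrable (fun y => K (t⁻¹ • (x - y))) ν := fun x =>
    ((hK.comp_inv_smul_sub ht.ne' x).smul_measure hc).mono_measure hνμ
  calc ∫ y, K (t⁻¹ • (x₁ - y)) * K (t⁻¹ • (x₂ - y)) ∂ν
      ≤ ∫ y, ε * (K (t⁻¹ • (x₁ - y)) + K (t⁻¹ • (x₂ - y))) ∂ν :=
        integral_mono_of_nonneg (ae_of_all _ fun y => mul_nonneg (hK0 _) (hK0 _))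
          (((hint x₁).add (hint x₂)).const_mul ε)
          (ae_of_all _ fun y => mul_le_mul_add_of_tail_le hK0 htail (hdist y ▸ hfar))
    _ = ε * (∫ y, K (t⁻¹ • (x₁ - y)) ∂ν + ∫ y, K (t⁻¹ • (x₂ - y)) ∂ν) := by
        rw [integral_const_mul, integral_add (hint x₁) (hint x₂)]
    _ ≤ ε * (2 * (c.toReal * (∫ u, K u ∂μ) * t ^ finrank ℝ E)) := by
        gcongr
        linarith [integral_kernel_le hc hνμ hK0 hK ht x₁, integral_kernel_le hc hνμ hK0 hK ht x₂]

theorem tendsto_integral_kernel_mul_kernel_div_pow (hc : c ≠ ⊤) (hνμ : ν ≤ c • μ)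
    (hK0 : 0 ≤ K) (hK : Integrable K μ) (hK_cocompact : Tendsto K (cocompact E) (𝓝 0))
    {x₁ x₂ : E} (hx : x₁ ≠ x₂) :
    Tendsto (fun t => (∫ y, K (t⁻¹ • (x₁ - y)) * K (t⁻¹ • (x₂ - y)) ∂ν) / t ^ finrank ℝ E)
      (𝓝[>] 0) (𝓝 0) := by
  set M := 2 * (c.toReal * ∫ u, K u ∂μ)
  have hM : 0 ≤ M := by have := integral_nonneg (μ := μ) hK0; positivity
  rw [Metric.tendsto_nhds]
  intro ε hε
  obtain ⟨r, hr⟩ : ∃ r, ∀ u : E, r ≤ ‖u‖ → K u ≤ ε / (M + 1) := by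
    have := hK_cocompact.eventually (ge_mem_nhds (show (0 : ℝ) < ε / (M + 1) by positivity))
    rw [← Metric.cobounded_eq_cocompact, ← comap_norm_atTop, eventually_comap,
      eventually_atTop] at this
    obtain ⟨r, hr⟩ := this
    exact ⟨r, fun u hu => hr _ hu u rfl⟩
  have hfar : ∀ᶠ t in 𝓝[>] 0, 2 * r ≤ t⁻¹ * ‖x₁ - x₂‖ :=
    (tendsto_inv_nhdsGT_zero.atTop_mul_const
      (norm_pos_iff.2 (sub_ne_zero.2 hx))).eventually_ge_atTop _
  filter_upwards [hfar, self_mem_nhdsWithin] with t hft (ht : 0 < t)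
  have htd : 0 < t ^ finrank ℝ E := pow_pos ht _
  rw [Real.dist_0_eq_abs, abs_of_nonneg (div_nonneg
    (integral_nonneg fun y => mul_nonneg (hK0 _) (hK0 _)) htd.le), div_lt_iff₀ htd]
  calc _ ≤ ε / (M + 1) * (2 * (c.toReal * (∫ u, K u ∂μ) * t ^ finrank ℝ E)) :=
        integral_kernel_mul_kernel_le_of_tail_le hc hνμ hK0 hK hr ht hft
    _ = ε * (M / (M + 1)) * t ^ finrank ℝ E := by ring
    _ < ε * t ^ finrank ℝ E := by
        gcongr
        exact mul_lt_of_lt_one_right hε ((div_lt_one (by positivity)).2 (lt_add_one M))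

theorem tendsto_covariance_kernel_div_pow [IsProbabilityMeasure ν] (hc : c ≠ ⊤)
    (hνμ : ν ≤ c • μ) (hK0 : 0 ≤ K) (hK_meas : Measurable K) {B : ℝ} (hKB : ∀ u, ‖K u‖ ≤ B)
    (hK : Integrable K μ) (hK_cocompact : Tendsto K (cocompact E) (𝓝 0))
    {x₁ x₂ : E} (hx : x₁ ≠ x₂) :
    Tendsto (fun t => cov[fun y => K (t⁻¹ • (x₁ - y)), fun y => K (t⁻¹ • (x₂ - y)); ν]
      / t ^ finrank ℝ E) (𝓝[>] 0) (𝓝 0) := by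
  have : Nontrivial E := nontrivial_of_ne x₁ x₂ hx
  set I := c.toReal * ∫ u, K u ∂μ
  have hI : 0 ≤ I := by have := integral_nonneg (μ := μ) hK0; positivity
  have hpow : Tendsto (fun t : ℝ => t ^ finrank ℝ E) (𝓝[>] 0) (𝓝 0) := by
    simpa [zero_pow finrank_pos.ne'] using
      ((continuous_pow (finrank ℝ E)).tendsto (0 : ℝ)).mono_left nhdsWithin_le_nhds
  have hmeans : Tendsto (fun t => (∫ y, K (t⁻¹ • (x₁ - y)) ∂ν) * (∫ y, K (t⁻¹ • (x₂ - y)) ∂ν)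
      / t ^ finrank ℝ E) (𝓝[>] 0) (𝓝 0) := by
    refine squeeze_zero' ?_ ?_ (by simpa using hpow.const_mul (I ^ 2))
    · filter_upwards [self_mem_nhdsWithin] with t (ht : 0 < t)
      exact div_nonneg (mul_nonneg (integral_nonneg fun y => hK0 (t⁻¹ • (x₁ - y)))
        (integral_nonneg fun y => hK0 (t⁻¹ • (x₂ - y)))) (pow_nonneg ht.le _)
    · filter_upwards [self_mem_nhdsWithin] with t (ht : 0 < t)
      have htd : 0 < t ^ finrank ℝ E := pow_pos ht _
      rw [div_le_iff₀ htd]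
      calc _ ≤ (I * t ^ finrank ℝ E) * (I * t ^ finrank ℝ E) :=
            mul_le_mul (integral_kernel_le hc hνμ hK0 hK ht x₁)
              (integral_kernel_le hc hνμ hK0 hK ht x₂)
              (integral_nonneg fun y => hK0 (t⁻¹ • (x₂ - y)))
              (mul_nonneg hI htd.le)
        _ = I ^ 2 * t ^ finrank ℝ E * t ^ finrank ℝ E := by ring
  have hdiff := (tendsto_integral_kernel_mul_kernel_div_pow hc hνμ hK0 hK hK_cocompact hx).sub
    hmeans
  rw [sub_zero] at hdiff
  refine hdiff.congr fun t => ?_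
  rw [covariance_eq_sub (memLp_comp_inv_smul_sub hK_meas hKB t x₁)
    (memLp_comp_inv_smul_sub hK_meas hKB t x₂), sub_div]
  rfl

end KernelSmoothing

section IID

variable {Ω α ι : Type*} [MeasurableSpace Ω] [MeasurableSpace α] {P : Measure Ω}
  {X : ι → Ω → α} {ν : Measure α} {φ ψ : α → ℝ}

theorem covariance_sum_comp_of_iIndepFun [IsFiniteMeasure P]
    (hX : ∀ i, MeasurePreserving (X i) P ν) (hindep : iIndepFun X P) (hφ : Measurable φ)
    (hψ : Measurable ψ) (hφ2 : MemLp φ 2 ν) (hψ2 : MemLp ψ 2 ν) (s : Finset ι) :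
    cov[fun ω => ∑ i ∈ s, φ (X i ω), fun ω => ∑ i ∈ s, ψ (X i ω); P]
      = s.card * cov[φ, ψ; ν] := by
  have hdiag : ∀ i, cov[φ ∘ X i, ψ ∘ X i; P] = cov[φ, ψ; ν] := fun i => by
    rw [← (hX i).map_eq, covariance_map hφ.aestronglyMeasurable hψ.aestronglyMeasurable
      (hX i).measurable.aemeasurable]
  have hoff : ∀ i j, i ≠ j → cov[φ ∘ X i, ψ ∘ X j; P] = 0 := fun i j hij =>
    ((hindep.indepFun hij).comp hφ hψ).covariance_eq_zero
      (hφ2.comp_measurePreserving (hX i)) (hψ2.comp_measurePreserving (hX j))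
  calc cov[fun ω => ∑ i ∈ s, φ (X i ω), fun ω => ∑ i ∈ s, ψ (X i ω); P]
      = ∑ i ∈ s, ∑ j ∈ s, cov[φ ∘ X i, ψ ∘ X j; P] :=
        covariance_fun_sum_fun_sum' (fun i _ => hφ2.comp_measurePreserving (hX i))
          (fun i _ => hψ2.comp_measurePreserving (hX i))
    _ = ∑ i ∈ s, cov[φ, ψ; ν] := Finset.sum_congr rfl fun i hi => by
        rw [Finset.sum_eq_single_of_mem i hi fun j _ hji => hoff i j hji.symm, hdiag]
    _ = s.card * cov[φ, ψ; ν] := by rw [Finset.sum_const, nsmul_eq_mul]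

theorem integral_mul_sub_mul_integral_of_iIndepFun [IsProbabilityMeasure P]
    (hX : ∀ i, MeasurePreserving (X i) P ν) (hindep : iIndepFun X P) (hφ : Measurable φ)
    (hψ : Measurable ψ) (hφ2 : MemLp φ 2 ν) (hψ2 : MemLp ψ 2 ν) (s : Finset ι) (a : ℝ) :
    (∫ ω, (a * ∑ i ∈ s, φ (X i ω)) * (a * ∑ i ∈ s, ψ (X i ω)) ∂P)
      - (∫ ω, a * ∑ i ∈ s, φ (X i ω) ∂P) * (∫ ω, a * ∑ i ∈ s, ψ (X i ω) ∂P)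
      = a ^ 2 * s.card * cov[φ, ψ; ν] := by
  have hsum : ∀ {g : α → ℝ}, MemLp g 2 ν → MemLp (fun ω => a * ∑ i ∈ s, g (X i ω)) 2 P :=
    fun hg2 => (memLp_finsetSum s fun i _ => hg2.comp_measurePreserving (hX i)).const_mul a
  calc _ = cov[fun ω => a * ∑ i ∈ s, φ (X i ω), fun ω => a * ∑ i ∈ s, ψ (X i ω); P] :=
        (covariance_eq_sub (hsum hφ2) (hsum hψ2)).symm
    _ = a ^ 2 * s.card * cov[φ, ψ; ν] := by
        rw [covariance_const_mul_left, covariance_const_mul_right,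
          covariance_sum_comp_of_iIndepFun hX hindep hφ hψ hφ2 hψ2]
        ring

end IID

theorem tendsto_mul_kde_covariance {Ω E : Type*} [MeasurableSpace Ω] [NormedAddCommGroup E]
    [NormedSpace ℝ E] [FiniteDimensional ℝ E] [MeasurableSpace E] [BorelSpace E]
    {P : Measure Ω} [IsProbabilityMeasure P] {μ ν : Measure E} [μ.IsAddHaarMeasure]
    [IsProbabilityMeasure ν] {X : ℕ → Ω → E} (hX : ∀ i, MeasurePreserving (X i) P ν)
    (hindep : iIndepFun X P) {c : ENNReal} (hc : c ≠ ⊤) (hνμ : ν ≤ c • μ) {K : E → ℝ}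
    (hK0 : 0 ≤ K) (hK_meas : Measurable K) {B : ℝ} (hKB : ∀ u, ‖K u‖ ≤ B)
    (hK : Integrable K μ) (hK_cocompact : Tendsto K (cocompact E) (𝓝 0)) {x₁ x₂ : E}
    (hx : x₁ ≠ x₂) {h : ℕ → ℝ} (h_pos : ∀ n, 0 < h n) (h_lim : Tendsto h atTop (𝓝 0)) :
    Tendsto (fun n : ℕ => (n : ℝ) * h n ^ finrank ℝ E *
      ((∫ ω, ((1 / (n * h n ^ finrank ℝ E)) * ∑ i ∈ Finset.range n, K ((h n)⁻¹ • (x₁ - X i ω)))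
          * ((1 / (n * h n ^ finrank ℝ E)) * ∑ i ∈ Finset.range n, K ((h n)⁻¹ • (x₂ - X i ω))) ∂P)
        - (∫ ω, (1 / (n * h n ^ finrank ℝ E)) * ∑ i ∈ Finset.range n,
            K ((h n)⁻¹ • (x₁ - X i ω)) ∂P)
          * (∫ ω, (1 / (n * h n ^ finrank ℝ E)) * ∑ i ∈ Finset.range n,
            K ((h n)⁻¹ • (x₂ - X i ω)) ∂P)))
      atTop (𝓝 0) := by
  have hφ_meas : ∀ (t : ℝ) (x : E), Measurable fun y => K (t⁻¹ • (x - y)) :=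
    fun t x => hK_meas.comp (by fun_prop)
  refine ((tendsto_covariance_kernel_div_pow hc hνμ hK0 hK_meas hKB hK hK_cocompact hx).comp
    (tendsto_nhdsWithin_iff.2 ⟨h_lim, Eventually.of_forall h_pos⟩)).congr' ?_
  filter_upwards [eventually_ge_atTop 1] with n hn
  have hn0 : (n : ℝ) ≠ 0 := by positivity
  rw [Function.comp_apply, integral_mul_sub_mul_integral_of_iIndepFun hX hindep
    (hφ_meas (h n) x₁) (hφ_meas (h n) x₂) (memLp_comp_inv_smul_sub hK_meas hKB _ _)
    (memLp_comp_inv_smul_sub hK_meas hKB _ _), Finset.card_range]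
  field_simp

theorem integrable_exp_neg_sq_norm_div_two {V : Type*} [NormedAddCommGroup V]
    [InnerProductSpace ℝ V] [FiniteDimensional ℝ V] [MeasurableSpace V] [BorelSpace V] :
    Integrable (fun u : V => exp (-‖u‖ ^ 2 / 2)) := by
  refine Integrable.of_integral_ne_zero ?_
  have h := GaussianFourier.integral_rexp_neg_mul_sq_norm (V := V) (b := 1 / 2) (by norm_num)
  simp_rw [show ∀ u : V, -(1 / 2) * ‖u‖ ^ 2 = -‖u‖ ^ 2 / 2 from fun u => by ring] at h
  rw [h]
  positivity

theorem tendsto_exp_neg_sq_norm_div_two_cocompact {E : Type*} [NormedAddCommGroup E]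
    [ProperSpace E] : Tendsto (fun u : E => exp (-‖u‖ ^ 2 / 2)) (cocompact E) (𝓝 0) :=
  tendsto_exp_atBot.comp <| (tendsto_neg_atTop_atBot.comp <|
    (tendsto_pow_atTop two_ne_zero).comp tendsto_norm_cocompact_atTop).atBot_div_const two_pos

theorem kde_asymptotic_uncorrelatedness_general
    {d : ℕ}
    {Ω : Type*} [MeasureSpace Ω] [IsProbabilityMeasure (ℙ : Measure Ω)]
    (X : ℕ → Ω → EuclideanSpace ℝ (Fin d))
    (hXmeas : ∀ i, Measurable (X i))
    (hXindep : iIndepFun X ℙ)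
    (f : EuclideanSpace ℝ (Fin d) → ℝ)
    (hf_bdd : ∃ C : ℝ, ∀ y, f y ≤ C)
    (hf_density : ∀ i, Measure.map (X i) ℙ
      = volume.withDensity (fun y => ENNReal.ofReal (f y)))
    (x₁ x₂ : EuclideanSpace ℝ (Fin d))
    (hx_ne : x₁ ≠ x₂)
    (h : ℕ → ℝ)
    (h_pos : ∀ n, 0 < h n)
    (h_to_zero : Tendsto h atTop (nhds 0)) :
    letI K : EuclideanSpace ℝ (Fin d) → ℝ :=
      fun u => (2 * π) ^ (-(d : ℝ) / 2) * Real.exp (-‖u‖ ^ 2 / 2)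
    letI fn : ℕ → EuclideanSpace ℝ (Fin d) → Ω → ℝ := fun n x ω =>
      (1 / ((n : ℝ) * h n ^ d)) * ∑ i ∈ Finset.range n, K ((h n)⁻¹ • (x - X i ω))
    Tendsto
      (fun n : ℕ => (n : ℝ) * h n ^ d *
        ((∫ ω, fn n x₁ ω * fn n x₂ ω ∂ℙ)
          - (∫ ω, fn n x₁ ω ∂ℙ) * (∫ ω, fn n x₂ ω ∂ℙ)))
      atTop (nhds 0) := by
  -- `letI` inlines `K` and `fn`: naming `K` and beta-reducing exposes the estimator's sums.
  set K : EuclideanSpace ℝ (Fin d) → ℝ := fun u => (2 * π) ^ (-(d : ℝ) / 2) * exp (-‖u‖ ^ 2 / 2)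
  beta_reduce
  obtain ⟨C, hC⟩ := hf_bdd
  set ν := volume.withDensity (fun y => ENNReal.ofReal (f y))
  have : IsProbabilityMeasure ν :=
    hf_density 0 ▸ Measure.isProbabilityMeasure_map (hXmeas 0).aemeasurable
  have hν : ν ≤ ENNReal.ofReal C • volume := by
    rw [← withDensity_const]
    exact withDensity_mono (ae_of_all _ fun y => ENNReal.ofReal_le_ofReal (hC y))
  have hK0 : 0 ≤ K := fun u => by positivity
  have hKB : ∀ u, ‖K u‖ ≤ (2 * π) ^ (-(d : ℝ) / 2) := fun u => by
    rw [Real.norm_of_nonneg (hK0 u)]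
    exact mul_le_of_le_one_right (by positivity) (exp_le_one_iff.2 (by nlinarith [sq_nonneg ‖u‖]))
  have hK_cocompact : Tendsto K (cocompact _) (𝓝 0) := by
    simpa using tendsto_exp_neg_sq_norm_div_two_cocompact.const_mul ((2 * π) ^ (-(d : ℝ) / 2))
  simpa only [finrank_euclideanSpace_fin] using
    tendsto_mul_kde_covariance (fun i => ⟨hXmeas i, hf_density i⟩) hXindep ENNReal.ofReal_ne_top
      hν hK0 (by fun_prop) hKB (integrable_exp_neg_sq_norm_div_two.const_mul _) hK_cocompact
      hx_ne h_pos h_to_zero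

/-- **Asymptotic uncorrelatedness of the kernel density estimator** (Lemma 2).
If the bandwidth sequence satisfies `h n → 0` and `x₁ ≠ x₂` are two distinct
continuity points of the common (bounded) density `f` of the i.i.d. samples,
then `n * h n ^ d * Cov[f_n(x₁), f_n(x₂)] → 0` as `n → ∞`. -/
theorem kde_asymptotic_uncorrelatedness
    {d : ℕ} (hd : 1 ≤ d)
    {Ω : Type*} [MeasureSpace Ω] [IsProbabilityMeasure (ℙ : Measure Ω)]
    (X : ℕ → Ω → EuclideanSpace ℝ (Fin d))
    (hXmeas : ∀ i, Measurable (X i))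
    (hXindep : iIndepFun X ℙ)
    (f : EuclideanSpace ℝ (Fin d) → ℝ)
    (hf_nonneg : ∀ y, 0 ≤ f y)
    (hf_bdd : ∃ C : ℝ, ∀ y, f y ≤ C)
    (hf_density : ∀ i, Measure.map (X i) ℙ
      = volume.withDensity (fun y => ENNReal.ofReal (f y)))
    (x₁ x₂ : EuclideanSpace ℝ (Fin d))
    (hx_ne : x₁ ≠ x₂)
    (hf_cont₁ : ContinuousAt f x₁)
    (hf_cont₂ : ContinuousAt f x₂)
    (h : ℕ → ℝ)
    (h_pos : ∀ n, 0 < h n)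
    (h_to_zero : Tendsto h atTop (nhds 0)) :
    letI K : EuclideanSpace ℝ (Fin d) → ℝ :=
      fun u => (2 * π) ^ (-(d : ℝ) / 2) * Real.exp (-‖u‖ ^ 2 / 2)
    letI fn : ℕ → EuclideanSpace ℝ (Fin d) → Ω → ℝ := fun n x ω =>
      (1 / ((n : ℝ) * h n ^ d)) * ∑ i ∈ Finset.range n, K ((h n)⁻¹ • (x - X i ω))
    Tendsto
      (fun n : ℕ => (n : ℝ) * h n ^ d *
        ((∫ ω, fn n x₁ ω * fn n x₂ ω ∂ℙ)
          - (∫ ω, fn n x₁ ω ∂ℙ) * (∫ ω, fn n x₂ ω ∂ℙ)))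
      atTop (nhds 0) :=
  kde_asymptotic_uncorrelatedness_general X hXmeas hXindep f hf_bdd hf_density x₁ x₂ hx_ne h h_pos
    h_to_zero
end

section
/- Let A, S̄ : ℝ → B(H) be continuous families of operators with each S̄(t) self-adjoint. Let Π̄ : ℝ → B(H) be a differentiable family such that each Π̄(t) is self-adjoint and boundedly invertible, satisfying the operator Riccati equation Π̄'(t) = A(t)Π̄(t) + Π̄(t)A(t)* − Π̄(t)S̄(t)Π̄(t) for all t. Let p̃ : ℝ → H be differentiable with p̃'(t) = (A(t) − Π̄(t)S̄(t)) p̃(t) for all t. Then the Lyapunov functional V(t) = ⟨Π̄(t)⁻¹ p̃(t), p̃(t)⟩ is differentiable and satisfies d/dt V(t) = −⟨S̄(t) p̃(t), p̃(t)⟩ for all t. -/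
/-!
Put `q = Pb⁻¹ p`. Differentiating `Pb⁻¹` and substituting the Riccati equation, all terms
containing `Sb` cancel and `q` solves the adjoint equation `q' = -A* q`. Then
`V = ⟪q, p⟫` has derivative `-⟪q, Pb Sb p⟫ = -⟪Pb q, Sb p⟫ = -⟪p, Sb p⟫`, since `Pb` is self-adjoint.
-/

open ContinuousLinearMap
open scoped RealInnerProductSpace

theorem HasDerivAt.inverse_of_mul_eq_one {𝕜 R : Type*} [NontriviallyNormedField 𝕜]
    [NormedRing R] [HasSummableGeomSeries R] [NormedAlgebra 𝕜 R] {P Q : 𝕜 → R} {P' : R} {t : 𝕜}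
    (hPQ : ∀ τ, P τ * Q τ = 1) (hQP : ∀ τ, Q τ * P τ = 1) (hP : HasDerivAt P P' t) :
    HasDerivAt Q (-(Q t * P' * Q t)) t := by
  let u : 𝕜 → Rˣ := fun τ => ⟨P τ, Q τ, hPQ τ, hQP τ⟩
  have hQ : Q = Ring.inverse ∘ P := funext fun τ => (Ring.inverse_unit (u τ)).symm
  have := (hasFDerivAt_ringInverse (𝕜 := 𝕜) (u t)).comp_hasDerivAt t hP
  rw [← hQ] at this
  simpa [u] using this

/-- With `Q = P⁻¹`, `P' = A P + P B - P S P` and `q = Q p` for `p' = (A - P S) p`, the left side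
is `q'` as an operator on `p`; so `q' = -B q`. -/
theorem riccati_costate_identity {R : Type*} [Ring R] {P Q A B S : R}
    (hPQ : P * Q = 1) (hQP : Q * P = 1) :
    -(Q * (A * P + P * B - P * (S * P)) * Q) + Q * (A - P * S) = -(B * Q) := by
  have hAP : Q * (A * P) * Q = Q * A := by rw [mul_assoc, mul_assoc, hPQ, mul_one]
  have hPB : Q * (P * B) * Q = B * Q := by rw [← mul_assoc Q, hQP, one_mul]
  have hPSP : Q * (P * (S * P)) * Q = S := by
    rw [← mul_assoc Q, hQP, one_mul, mul_assoc, hPQ, mul_one]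
  have hPS : Q * (P * S) = S := by rw [← mul_assoc, hQP, one_mul]
  rw [mul_sub, mul_sub, sub_mul, mul_add, add_mul, hAP, hPB, hPSP, hPS]
  abel

theorem HasDerivAt.inner_of_adjoint_dynamics {E : Type*} [NormedAddCommGroup E]
    [InnerProductSpace ℝ E] [CompleteSpace E] {p q : ℝ → E} {A K : E →L[ℝ] E} {t : ℝ}
    (hq : HasDerivAt q (-adjoint A (q t)) t) (hp : HasDerivAt p ((A - K) (p t)) t) :
    HasDerivAt (fun τ => ⟪q τ, p τ⟫) (-⟪q t, K (p t)⟫) t := by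
  refine (hq.inner ℝ hp).congr_deriv ?_
  rw [inner_neg_left, adjoint_inner_left, sub_apply, inner_sub_right]
  ring

theorem lyapunov_functional_derivative_general
    {H : Type*} [NormedAddCommGroup H] [InnerProductSpace ℝ H] [CompleteSpace H]
    (A Sb Pb Pbinv : ℝ → H →L[ℝ] H)
    (hPb_sa : ∀ t, adjoint (Pb t) = Pb t)
    (hPb_inv₁ : ∀ t, Pb t ∘L Pbinv t = 1)
    (hPb_inv₂ : ∀ t, Pbinv t ∘L Pb t = 1)
    (hPb_riccati : ∀ t, HasDerivAt Pb
      (A t ∘L Pb t + Pb t ∘L adjoint (A t) - Pb t ∘L (Sb t ∘L Pb t)) t)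
    (p : ℝ → H)
    (hp : ∀ t, HasDerivAt p ((A t - Pb t ∘L Sb t) (p t)) t) :
    ∀ t, HasDerivAt (fun τ => ⟪Pbinv τ (p τ), p τ⟫)
      (-⟪Sb t (p t), p t⟫) t := by
  intro t
  have hPbinv := HasDerivAt.inverse_of_mul_eq_one hPb_inv₁ hPb_inv₂ (hPb_riccati t)
  have hcostate : HasDerivAt (fun τ => Pbinv τ (p τ)) (-adjoint (A t) (Pbinv t (p t))) t := by
    refine (hPbinv.clm_apply (hp t)).congr_deriv ?_
    have := riccati_costate_identity (A := A t) (B := adjoint (A t)) (S := Sb t)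
      (hPb_inv₁ t) (hPb_inv₂ t)
    simpa only [mul_def, add_apply, neg_apply, comp_apply] using congr($this (p t))
  refine (hcostate.inner_of_adjoint_dynamics (hp t)).congr_deriv ?_
  have hPbPbinv : Pb t (Pbinv t (p t)) = p t := congr($(hPb_inv₁ t) (p t))
  rw [comp_apply, ← adjoint_inner_left, hPb_sa, hPbPbinv, real_inner_comm]

/-- **Derivative of the Lyapunov functional** (used in the proof of Theorem 1).
If `Pb` solves the operator Riccati equation `Pb' = A Pb + Pb A* - Pb Sb Pb`,
each `Pb t` is self-adjoint and boundedly invertible (with inverse `Pbinv t`),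
each `Sb t` is self-adjoint, and `p` solves the unforced error dynamics
`p' = (A - Pb Sb) p`, then `V(t) = ⟪Pb(t)⁻¹ p(t), p(t)⟫` is differentiable with
`V'(t) = -⟪Sb(t) p(t), p(t)⟫`. -/
theorem lyapunov_functional_derivative
    {H : Type*} [NormedAddCommGroup H] [InnerProductSpace ℝ H] [CompleteSpace H]
    (A Sb Pb Pbinv : ℝ → H →L[ℝ] H)
    (hA_cont : Continuous A) (hSb_cont : Continuous Sb)
    (hSb_sa : ∀ t, adjoint (Sb t) = Sb t)
    (hPb_sa : ∀ t, adjoint (Pb t) = Pb t)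
    (hPb_inv₁ : ∀ t, Pb t ∘L Pbinv t = 1)
    (hPb_inv₂ : ∀ t, Pbinv t ∘L Pb t = 1)
    (hPb_riccati : ∀ t, HasDerivAt Pb
      (A t ∘L Pb t + Pb t ∘L adjoint (A t) - Pb t ∘L (Sb t ∘L Pb t)) t)
    (p : ℝ → H)
    (hp : ∀ t, HasDerivAt p ((A t - Pb t ∘L Sb t) (p t)) t) :
    ∀ t, HasDerivAt (fun τ => ⟪Pbinv τ (p τ), p τ⟫)
      (-⟪Sb t (p t), p t⟫) t :=
  lyapunov_functional_derivative_general A Sb Pb Pbinv hPb_sa hPb_inv₁ hPb_inv₂ hPb_riccati p hp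
end

section
/- Let A, S̄ : ℝ → B(H) be continuous families of operators with each S̄(t) self-adjoint, and let Π̄ : ℝ → B(H) be a differentiable family with each Π̄(t) self-adjoint and boundedly invertible, satisfying the operator Riccati equation Π̄'(t) = A(t)Π̄(t) + Π̄(t)A(t)* − Π̄(t)S̄(t)Π̄(t). Suppose there exist constants c₁, c₂ > 0 such that for all t: c₁I ≤ S̄(t) and c₁I ≤ Π̄(t)⁻¹ ≤ c₂I. Then the unforced estimation-error dynamics p̃'(t) = (A(t) − Π̄(t)S̄(t)) p̃(t) are uniformly exponentially stable: every differentiable solution p̃ satisfies, for all t₀ and all t ≥ t₀, ‖p̃(t)‖ ≤ √(c₂/c₁) · exp(−(c₁/(2c₂))(t − t₀)) · ‖p̃(t₀)‖. -/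
/-!
The Lyapunov function `V t = ⟪Π̄(t)⁻¹ p t, p t⟫` does the work. Differentiating `Π̄⁻¹ Π̄ = 1`
turns the Riccati equation into the Lyapunov equation `(Π̄⁻¹)' = S̄ - Π̄⁻¹ A - A* Π̄⁻¹`, and along
the error dynamics everything cancels except `V' = -⟪S̄ p, p⟫ ≤ -c₁ ‖p‖² ≤ -(c₁ / c₂) V`.
Grönwall gives `V t ≤ e^{-(c₁/c₂)(t - t₀)} V t₀`, and the bounds `c₁ ‖p‖² ≤ V ≤ c₂ ‖p‖²`
convert this into the estimate on `‖p t‖`.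
-/

open ContinuousLinearMap
open scoped RealInnerProductSpace

theorem le_mul_exp_of_hasDerivAt_le_neg_mul {V V' : ℝ → ℝ} {k t₀ t : ℝ}
    (hV : ∀ s, HasDerivAt V (V' s) s) (hV' : ∀ s, V' s ≤ -k * V s) (ht : t₀ ≤ t) :
    V t ≤ V t₀ * Real.exp (-k * (t - t₀)) := by
  have := le_gronwallBound_of_liminf_deriv_right_le (f := V) (f' := V') (K := -k) (ε := 0)
    (b := t) (fun s _ => (hV s).continuousAt.continuousWithinAt)
    (fun s _ r hr => by
      simpa [slope_def_field, div_eq_inv_mul] using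
        (hV s).hasDerivWithinAt.liminf_right_slope_le hr)
    le_rfl (fun s _ => by simpa using hV' s) t ⟨ht, le_rfl⟩
  rwa [gronwallBound_ε0] at this

theorem hasDerivAt_inverse_family {𝕜 R : Type*} [NontriviallyNormedField 𝕜] [NormedRing R]
    [HasSummableGeomSeries R] [NormedAlgebra 𝕜 R] {P Q : 𝕜 → R} {P' : R} {t : 𝕜}
    (hPQ : ∀ s, P s * Q s = 1) (hQP : ∀ s, Q s * P s = 1) (hP : HasDerivAt P P' t) :
    HasDerivAt Q (-(Q t * P' * Q t)) t := by
  have hQ : Q = Ring.inverse ∘ P := funext fun s =>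
    (Ring.inverse_unit ⟨P s, Q s, hPQ s, hQP s⟩).symm
  have := (hasFDerivAt_ringInverse (𝕜 := 𝕜) ⟨P t, Q t, hPQ t, hQP t⟩).comp_hasDerivAt t hP
  simpa only [ContinuousLinearMap.mulLeftRight_apply, neg_apply, Units.inv_mk, ← hQ] using this

theorem neg_mul_riccati_mul_eq {R : Type*} [Ring R] {P Q : R} (A B S : R) (hPQ : P * Q = 1)
    (hQP : Q * P = 1) : -(Q * (A * P + P * B - P * (S * P)) * Q) = S - Q * A - B * Q := by
  have hQPx : ∀ x, Q * (P * x) = x := fun x => by rw [← mul_assoc, hQP, one_mul]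
  simp only [mul_add, mul_sub, add_mul, sub_mul, mul_assoc, hPQ, hQPx, mul_one]
  abel

theorem le_sqrt_div_mul_exp_mul {a b c₁ c₂ x : ℝ} (hc₁ : 0 < c₁) (hc₂ : 0 ≤ c₂) (hb : 0 ≤ b)
    (h : c₁ * a ^ 2 ≤ c₂ * Real.exp (2 * x) * b ^ 2) :
    a ≤ Real.sqrt (c₂ / c₁) * Real.exp x * b := by
  have hsq : a ^ 2 ≤ (Real.sqrt (c₂ / c₁) * Real.exp x * b) ^ 2 := by
    rw [mul_pow, mul_pow, Real.sq_sqrt (div_nonneg hc₂ hc₁.le), ← Real.exp_nat_mul,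
      div_mul_eq_mul_div, div_mul_eq_mul_div, le_div_iff₀ hc₁]
    push_cast
    linarith
  exact (le_abs_self a).trans (abs_le_of_sq_le_sq hsq (by positivity))

section

variable {H : Type*} [NormedAddCommGroup H] [InnerProductSpace ℝ H] [CompleteSpace H]

theorem inner_lyapunov_derivative_eq (A S P Q : H →L[ℝ] H) (hP : adjoint P = P) (hPQ : P * Q = 1)
    (hQP : Q * P = 1) (x : H) :
    ⟪(S - Q * A - adjoint A * Q) x, x⟫ + ⟪Q ((A - P * S) x), x⟫ + ⟪Q x, (A - P * S) x⟫
      = -⟪S x, x⟫ := by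
  have hQP' : Q (P (S x)) = S x := DFunLike.congr_fun hQP (S x)
  have hPQ' : P (Q x) = x := DFunLike.congr_fun hPQ x
  have hP_sym : ⟪Q x, P (S x)⟫ = ⟪S x, x⟫ := by
    rw [← adjoint_inner_left, hP, hPQ', real_inner_comm]
  simp only [sub_apply, mul_apply_eq_comp, map_sub, inner_sub_left, inner_sub_right, hQP', hP_sym,
    adjoint_inner_left]
  ring

theorem hasDerivAt_inner_apply_self_of_riccati {A S P Q : ℝ → H →L[ℝ] H} {p : ℝ → H} {t : ℝ}
    (hP_sa : adjoint (P t) = P t) (hPQ : ∀ s, P s * Q s = 1) (hQP : ∀ s, Q s * P s = 1)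
    (hP : HasDerivAt P (A t * P t + P t * adjoint (A t) - P t * (S t * P t)) t)
    (hp : HasDerivAt p ((A t - P t * S t) (p t)) t) :
    HasDerivAt (fun s => ⟪Q s (p s), p s⟫) (-⟪S t (p t), p t⟫) t := by
  have hQ := hasDerivAt_inverse_family hPQ hQP hP
  rw [neg_mul_riccati_mul_eq _ _ _ (hPQ t) (hQP t)] at hQ
  refine ((hQ.clm_apply hp).inner ℝ hp).congr_deriv ?_
  rw [← inner_lyapunov_derivative_eq (A t) (S t) (P t) (Q t) hP_sa (hPQ t) (hQP t), inner_add_left,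
    add_comm]

end

theorem suboptimal_error_dynamics_uniformly_exponentially_stable_general
    {H : Type*} [NormedAddCommGroup H] [InnerProductSpace ℝ H] [CompleteSpace H]
    (A Sb Pb Pbinv : ℝ → H →L[ℝ] H)
    (hPb_sa : ∀ t, adjoint (Pb t) = Pb t)
    (hPb_inv₁ : ∀ t, Pb t ∘L Pbinv t = 1)
    (hPb_inv₂ : ∀ t, Pbinv t ∘L Pb t = 1)
    (hPb_riccati : ∀ t, HasDerivAt Pb
      (A t ∘L Pb t + Pb t ∘L adjoint (A t) - Pb t ∘L (Sb t ∘L Pb t)) t)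
    (c₁ c₂ : ℝ) (hc₁ : 0 < c₁) (hc₂ : 0 < c₂)
    (hSb_lb : ∀ t x, c₁ * ‖x‖ ^ 2 ≤ ⟪Sb t x, x⟫)
    (hPbinv_lb : ∀ t x, c₁ * ‖x‖ ^ 2 ≤ ⟪Pbinv t x, x⟫)
    (hPbinv_ub : ∀ t x, ⟪Pbinv t x, x⟫ ≤ c₂ * ‖x‖ ^ 2)
    (p : ℝ → H)
    (hp : ∀ t, HasDerivAt p ((A t - Pb t ∘L Sb t) (p t)) t) :
    ∀ t₀ t, t₀ ≤ t →
      ‖p t‖ ≤ Real.sqrt (c₂ / c₁) * Real.exp (-(c₁ / (2 * c₂)) * (t - t₀)) * ‖p t₀‖ := by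
  intro t₀ t ht
  have hV (s : ℝ) := hasDerivAt_inner_apply_self_of_riccati (hPb_sa s) hPb_inv₁ hPb_inv₂
    (hPb_riccati s) (hp s)
  have hV' (s : ℝ) : -⟪Sb s (p s), p s⟫ ≤ -(c₁ / c₂) * ⟪Pbinv s (p s), p s⟫ :=
    calc -⟪Sb s (p s), p s⟫ ≤ -(c₁ * ‖p s‖ ^ 2) := neg_le_neg (hSb_lb s (p s))
      _ = -(c₁ / c₂) * (c₂ * ‖p s‖ ^ 2) := by field_simp
      _ ≤ -(c₁ / c₂) * ⟪Pbinv s (p s), p s⟫ :=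
        mul_le_mul_of_nonpos_left (hPbinv_ub s (p s)) (neg_nonpos.2 (div_pos hc₁ hc₂).le)
  apply le_sqrt_div_mul_exp_mul hc₁ hc₂.le (norm_nonneg _)
  calc c₁ * ‖p t‖ ^ 2 ≤ ⟪Pbinv t (p t), p t⟫ := hPbinv_lb t (p t)
    _ ≤ ⟪Pbinv t₀ (p t₀), p t₀⟫ * Real.exp (-(c₁ / c₂) * (t - t₀)) :=
      le_mul_exp_of_hasDerivAt_le_neg_mul hV hV' ht
    _ ≤ c₂ * ‖p t₀‖ ^ 2 * Real.exp (-(c₁ / c₂) * (t - t₀)) := by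
      gcongr
      exact hPbinv_ub t₀ (p t₀)
    _ = c₂ * Real.exp (2 * (-(c₁ / (2 * c₂)) * (t - t₀))) * ‖p t₀‖ ^ 2 := by
      field_simp

/-- **Uniform exponential stability of the unforced suboptimal error dynamics**
(first statement of Theorem 1). If `Pb` solves the operator Riccati equation
`Pb' = A Pb + Pb A* - Pb Sb Pb`, each `Pb t` is self-adjoint and boundedly
invertible, each `Sb t` is self-adjoint, and `c₁ I ≤ Sb t`,
`c₁ I ≤ (Pb t)⁻¹ ≤ c₂ I` uniformly in `t`, then every solution of
`p' = (A - Pb Sb) p` satisfies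
`‖p t‖ ≤ √(c₂/c₁) exp(-(c₁/(2c₂))(t - t₀)) ‖p t₀‖` for all `t ≥ t₀`. -/
theorem suboptimal_error_dynamics_uniformly_exponentially_stable
    {H : Type*} [NormedAddCommGroup H] [InnerProductSpace ℝ H] [CompleteSpace H]
    (A Sb Pb Pbinv : ℝ → H →L[ℝ] H)
    (hA_cont : Continuous A) (hSb_cont : Continuous Sb)
    (hSb_sa : ∀ t, adjoint (Sb t) = Sb t)
    (hPb_sa : ∀ t, adjoint (Pb t) = Pb t)
    (hPb_inv₁ : ∀ t, Pb t ∘L Pbinv t = 1)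
    (hPb_inv₂ : ∀ t, Pbinv t ∘L Pb t = 1)
    (hPb_riccati : ∀ t, HasDerivAt Pb
      (A t ∘L Pb t + Pb t ∘L adjoint (A t) - Pb t ∘L (Sb t ∘L Pb t)) t)
    (c₁ c₂ : ℝ) (hc₁ : 0 < c₁) (hc₂ : 0 < c₂)
    (hSb_lb : ∀ t x, c₁ * ‖x‖ ^ 2 ≤ ⟪Sb t x, x⟫)
    (hPbinv_lb : ∀ t x, c₁ * ‖x‖ ^ 2 ≤ ⟪Pbinv t x, x⟫)
    (hPbinv_ub : ∀ t x, ⟪Pbinv t x, x⟫ ≤ c₂ * ‖x‖ ^ 2)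
    (p : ℝ → H)
    (hp : ∀ t, HasDerivAt p ((A t - Pb t ∘L Sb t) (p t)) t) :
    ∀ t₀ t, t₀ ≤ t →
      ‖p t‖ ≤ Real.sqrt (c₂ / c₁) * Real.exp (-(c₁ / (2 * c₂)) * (t - t₀)) * ‖p t₀‖ :=
  suboptimal_error_dynamics_uniformly_exponentially_stable_general A Sb Pb Pbinv hPb_sa hPb_inv₁
    hPb_inv₂ hPb_riccati c₁ c₂ hc₁ hc₂ hSb_lb hPbinv_lb hPbinv_ub p hp
end

section
/- Let A, S : ℝ → B(H) be continuous families of operators with each S(t) self-adjoint, and let Π : ℝ → B(H) be a differentiable family with each Π(t) self-adjoint and boundedly invertible, satisfying the operator Riccati equation Π'(t) = A(t)Π(t) + Π(t)A(t)* − Π(t)S(t)Π(t). Suppose there exist constants c₁, c₂ > 0 such that for all t: c₁I ≤ S(t) and c₁I ≤ Π(t)⁻¹ ≤ c₂I. Then the unforced optimal estimation-error dynamics p̃'(t) = (A(t) − Π(t)S(t)) p̃(t) are uniformly exponentially stable: every differentiable solution p̃ satisfies, for all t₀ and all t ≥ t₀, ‖p̃(t)‖ ≤ √(c₂/c₁)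 · exp(−(c₁/(2c₂))(t − t₀)) · ‖p̃(t₀)‖. -/
open ContinuousLinearMap
open scoped RealInnerProductSpace

/-!
Along a solution `p`, take the Lyapunov function `V = ⟪P⁻¹ p, p⟫`. Differentiating `P⁻¹ P = 1`
turns the Riccati equation into `(P⁻¹)' = S - P⁻¹ A - A* P⁻¹`; its `A`-terms cancel those coming
from `p' = (A - P S) p`, and the self-adjointness of `P` turns `⟪P⁻¹ p, P S p⟫` into `⟪S p, p⟫`,
leaving `V' = -⟪S p, p⟫ ≤ -c₁‖p‖² ≤ -(c₁/c₂) V`. Grönwall gives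
`V t ≤ e^{-(c₁/c₂)(t - t₀)} V t₀`, and `c₁‖p‖² ≤ V ≤ c₂‖p‖²` converts this into the bound on `‖p‖`,
the square root halving the rate.
-/

theorem HasDerivAt.of_mul_eq_one {𝕜 R : Type*} [NontriviallyNormedField 𝕜] [NormedRing R]
    [NormedAlgebra 𝕜 R] [HasSummableGeomSeries R] {f g : 𝕜 → R} {f' : R} {t : 𝕜}
    (hfg : ∀ s, f s * g s = 1) (hgf : ∀ s, g s * f s = 1) (hf : HasDerivAt f f' t) :
    HasDerivAt g (-(g t * f' * g t)) t := by
  let u : 𝕜 → Rˣ := fun s => ⟨f s, g s, hfg s, hgf s⟩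
  have hg : Ring.inverse ∘ f = g := funext fun s => Ring.inverse_unit (u s)
  have h : HasDerivAt (Ring.inverse ∘ f) (-(g t * f' * g t)) t :=
    (hasFDerivAt_ringInverse (u t)).comp_hasDerivAt t hf
  rwa [hg] at h

theorem HasDerivAt.inverse_of_riccati {𝕜 E : Type*} [NontriviallyNormedField 𝕜]
    [NormedAddCommGroup E] [NormedSpace 𝕜 E] [CompleteSpace E]
    {P Q : 𝕜 → E →L[𝕜] E} {A B S : E →L[𝕜] E} {t : 𝕜}
    (hPQ : ∀ s, P s ∘L Q s = 1) (hQP : ∀ s, Q s ∘L P s = 1)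
    (hP : HasDerivAt P (A ∘L P t + P t ∘L B - P t ∘L (S ∘L P t)) t) :
    HasDerivAt Q (S - Q t ∘L A - B ∘L Q t) t := by
  refine (hP.of_mul_eq_one hPQ hQP).congr_deriv ?_
  ext x
  have hPQx : P t (Q t x) = x := congr($(hPQ t) x)
  have hQPx : ∀ y, Q t (P t y) = y := fun y => congr($(hQP t) y)
  simp only [mul_def, comp_sub, comp_add, sub_comp, add_comp, neg_sub, sub_apply, add_apply,
    comp_apply, hPQx, hQPx]
  abel

theorem hasDerivAt_inner_apply_self_of_inverse_riccati {H : Type*} [NormedAddCommGroup H]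
    [InnerProductSpace ℝ H] [CompleteSpace H] {Q : ℝ → H →L[ℝ] H} {p : ℝ → H}
    {A S P₀ : H →L[ℝ] H} {t : ℝ} (hP₀ : adjoint P₀ = P₀) (hPQ : P₀ ∘L Q t = 1)
    (hQP : Q t ∘L P₀ = 1)
    (hQ : HasDerivAt Q (S - Q t ∘L A - adjoint A ∘L Q t) t)
    (hp : HasDerivAt p ((A - P₀ ∘L S) (p t)) t) :
    HasDerivAt (fun s => ⟪Q s (p s), p s⟫) (-⟪S (p t), p t⟫) t := by
  refine ((hQ.clm_apply hp).inner ℝ hp).congr_deriv ?_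
  have hPS : ⟪Q t (p t), P₀ (S (p t))⟫ = ⟪S (p t), p t⟫ := by
    rw [← hP₀, adjoint_inner_right, ← comp_apply, hPQ, one_apply_eq_self, real_inner_comm]
  have hA : ⟪adjoint A (Q t (p t)), p t⟫ = ⟪Q t (p t), A (p t)⟫ := adjoint_inner_left _ _ _
  have hQPS : Q t (P₀ (S (p t))) = S (p t) := by rw [← comp_apply, hQP, one_apply_eq_self]
  simp only [sub_apply, comp_apply, map_sub, inner_sub_left, inner_add_left, inner_sub_right, hQPS]
  linarith

theorem le_mul_exp_of_hasDerivAt_le_mul {f f' : ℝ → ℝ} {K t₀ t : ℝ}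
    (hf : ∀ s, HasDerivAt f (f' s) s) (hbound : ∀ s, f' s ≤ K * f s) (ht : t₀ ≤ t) :
    f t ≤ f t₀ * Real.exp (K * (t - t₀)) := by
  have h := le_gronwallBound_of_liminf_deriv_right_le (ε := 0) (b := t)
    (fun s _ => (hf s).continuousAt.continuousWithinAt)
    (fun s _ _ hr => (hf s).hasDerivWithinAt.liminf_right_slope_le hr) le_rfl
    (fun s _ => by simpa using hbound s) t ⟨ht, le_rfl⟩
  rwa [gronwallBound_ε0] at h

theorem le_sqrt_div_mul_exp_mul_of_mul_sq_le {a b c₁ c₂ μ : ℝ} (hc₁ : 0 < c₁) (hb : 0 ≤ b)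
    (h : c₁ * a ^ 2 ≤ c₂ * b ^ 2 * Real.exp (2 * μ)) :
    a ≤ Real.sqrt (c₂ / c₁) * Real.exp μ * b := by
  have hsq : a ^ 2 ≤ c₂ / c₁ * b ^ 2 * Real.exp μ ^ 2 := by
    rw [← Real.exp_nat_mul, div_mul_eq_mul_div, div_mul_eq_mul_div, le_div_iff₀ hc₁]
    push_cast
    linarith
  calc a ≤ |a| := le_abs_self a
    _ ≤ Real.sqrt (c₂ / c₁ * b ^ 2 * Real.exp μ ^ 2) := Real.abs_le_sqrt hsq
    _ = Real.sqrt (c₂ / c₁) * Real.exp μ * b := by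
      rw [Real.sqrt_mul' _ (by positivity), Real.sqrt_mul' _ (by positivity),
        Real.sqrt_sq hb, Real.sqrt_sq (Real.exp_pos μ).le]
      ring

theorem optimal_error_dynamics_uniformly_exponentially_stable_general
    {H : Type*} [NormedAddCommGroup H] [InnerProductSpace ℝ H] [CompleteSpace H]
    (A S P Pinv : ℝ → H →L[ℝ] H)
    (hP_sa : ∀ t, adjoint (P t) = P t)
    (hP_inv₁ : ∀ t, P t ∘L Pinv t = 1)
    (hP_inv₂ : ∀ t, Pinv t ∘L P t = 1)
    (hP_riccati : ∀ t, HasDerivAt P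
      (A t ∘L P t + P t ∘L adjoint (A t) - P t ∘L (S t ∘L P t)) t)
    (c₁ c₂ : ℝ) (hc₁ : 0 < c₁) (hc₂ : 0 < c₂)
    (hS_lb : ∀ t x, c₁ * ‖x‖ ^ 2 ≤ ⟪S t x, x⟫)
    (hPinv_lb : ∀ t x, c₁ * ‖x‖ ^ 2 ≤ ⟪Pinv t x, x⟫)
    (hPinv_ub : ∀ t x, ⟪Pinv t x, x⟫ ≤ c₂ * ‖x‖ ^ 2)
    (p : ℝ → H)
    (hp : ∀ t, HasDerivAt p ((A t - P t ∘L S t) (p t)) t) :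
    ∀ t₀ t, t₀ ≤ t →
      ‖p t‖ ≤ Real.sqrt (c₂ / c₁) * Real.exp (-(c₁ / (2 * c₂)) * (t - t₀)) * ‖p t₀‖ := by
  intro t₀ t ht
  set V : ℝ → ℝ := fun s => ⟪Pinv s (p s), p s⟫
  have hV : ∀ s, HasDerivAt V (-⟪S s (p s), p s⟫) s := fun s =>
    hasDerivAt_inner_apply_self_of_inverse_riccati (hP_sa s) (hP_inv₁ s) (hP_inv₂ s)
      ((hP_riccati s).inverse_of_riccati hP_inv₁ hP_inv₂) (hp s)
  have hV_decay : ∀ s, -⟪S s (p s), p s⟫ ≤ -(c₁ / c₂) * V s := fun s => by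
    have hVs : c₁ / c₂ * V s ≤ c₁ / c₂ * (c₂ * ‖p s‖ ^ 2) :=
      mul_le_mul_of_nonneg_left (hPinv_ub s (p s)) (div_pos hc₁ hc₂).le
    have hc : c₁ / c₂ * (c₂ * ‖p s‖ ^ 2) = c₁ * ‖p s‖ ^ 2 := by field_simp
    linarith [hS_lb s (p s)]
  refine le_sqrt_div_mul_exp_mul_of_mul_sq_le hc₁ (norm_nonneg _) ?_
  calc c₁ * ‖p t‖ ^ 2 ≤ V t := hPinv_lb t (p t)
    _ ≤ V t₀ * Real.exp (-(c₁ / c₂) * (t - t₀)) :=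
      le_mul_exp_of_hasDerivAt_le_mul hV hV_decay ht
    _ ≤ c₂ * ‖p t₀‖ ^ 2 * Real.exp (-(c₁ / c₂) * (t - t₀)) := by
      gcongr
      exact hPinv_ub t₀ (p t₀)
    _ = _ := by congr 2; field_simp

/-- **Uniform exponential stability of the unforced optimal error dynamics**
(established in the proof of Theorem 1 via the Lyapunov functional `V₂ = ⟪Π⁻¹p̃, p̃⟫`). If `P` solves the operator Riccati equation
`P' = A P + P A* - P S P`, each `P t` is self-adjoint and boundedly
invertible, each `S t` is self-adjoint, and `c₁ I ≤ S t`,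
`c₁ I ≤ (P t)⁻¹ ≤ c₂ I` uniformly in `t`, then every solution of
`p' = (A - P S) p` satisfies
`‖p t‖ ≤ √(c₂/c₁) exp(-(c₁/(2c₂))(t - t₀)) ‖p t₀‖` for all `t ≥ t₀`. -/
theorem optimal_error_dynamics_uniformly_exponentially_stable
    {H : Type*} [NormedAddCommGroup H] [InnerProductSpace ℝ H] [CompleteSpace H]
    (A S P Pinv : ℝ → H →L[ℝ] H)
    (hA_cont : Continuous A) (hS_cont : Continuous S)
    (hS_sa : ∀ t, adjoint (S t) = S t)
    (hP_sa : ∀ t, adjoint (P t) = P t)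
    (hP_inv₁ : ∀ t, P t ∘L Pinv t = 1)
    (hP_inv₂ : ∀ t, Pinv t ∘L P t = 1)
    (hP_riccati : ∀ t, HasDerivAt P
      (A t ∘L P t + P t ∘L adjoint (A t) - P t ∘L (S t ∘L P t)) t)
    (c₁ c₂ : ℝ) (hc₁ : 0 < c₁) (hc₂ : 0 < c₂)
    (hS_lb : ∀ t x, c₁ * ‖x‖ ^ 2 ≤ ⟪S t x, x⟫)
    (hPinv_lb : ∀ t x, c₁ * ‖x‖ ^ 2 ≤ ⟪Pinv t x, x⟫)
    (hPinv_ub : ∀ t x, ⟪Pinv t x, x⟫ ≤ c₂ * ‖x‖ ^ 2)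
    (p : ℝ → H)
    (hp : ∀ t, HasDerivAt p ((A t - P t ∘L S t) (p t)) t) :
    ∀ t₀ t, t₀ ≤ t →
      ‖p t‖ ≤ Real.sqrt (c₂ / c₁) * Real.exp (-(c₁ / (2 * c₂)) * (t - t₀)) * ‖p t₀‖ :=
  optimal_error_dynamics_uniformly_exponentially_stable_general A S P Pinv hP_sa hP_inv₁ hP_inv₂
    hP_riccati c₁ c₂ hc₁ hc₂ hS_lb hPinv_lb hPinv_ub p hp
end
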